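/- arXiv:1305.3402 — 4 statements merged into one kernel-verified Lean document; each statement's English description precedes it below -/
import Mathlib

section
/- Let U ⊂ ℝ² be open, let X = (P,Q) be a C¹ vector field on U, and let D : U → ℝ be a C¹ function. Set M = div(DX) = (∂D/∂x)P + (∂D/∂y)Q + D·div X. Assume that M ≥ 0 on U (or M ≤ 0 on U), that the set {M = 0} has zero Lebesgue measure, and that {M = 0} ∩ {D = 0} contains the image of no periodic orbit of the system. Then every periodic orbit γ of ẋ = P, ẏ = Q whose image is contained in U satisfies D(γ(t)) ≠ 0 for all t; i.e., no periodic orbit contained in U meets the set {D = 0}. -/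
open MeasureTheory Set

/-- Partial derivative with respect to the first coordinate. -/
noncomputable def pdx (f : ℝ × ℝ → ℝ) (p : ℝ × ℝ) : ℝ := fderiv ℝ f p (1, 0)

/-- Partial derivative with respect to the second coordinate. -/
noncomputable def pdy (f : ℝ × ℝ → ℝ) (p : ℝ × ℝ) : ℝ := fderiv ℝ f p (0, 1)

/-- `γ` is a solution of the planar system `ẋ = P(x,y), ẏ = Q(x,y)`. -/
def IsSolution (P Q : ℝ × ℝ → ℝ) (γ : ℝ → ℝ × ℝ) : Prop :=
  ∀ t, HasDerivAt γ (P (γ t), Q (γ t)) t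

/-- A periodic orbit: a nonconstant periodic solution. -/
def IsPeriodicOrbit (P Q : ℝ × ℝ → ℝ) (γ : ℝ → ℝ × ℝ) : Prop :=
  IsSolution P Q γ ∧ (∃ T > 0, Function.Periodic γ T) ∧ ¬(∀ t, γ t = γ 0)

/-- A limit cycle: a periodic orbit whose image has a neighborhood containing
the image of no periodic orbit other than itself. -/
def IsLimitCycle (P Q : ℝ × ℝ → ℝ) (γ : ℝ → ℝ × ℝ) : Prop :=
  IsPeriodicOrbit P Q γ ∧
    ∃ U : Set (ℝ × ℝ), IsOpen U ∧ Set.range γ ⊆ U ∧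
      ∀ γ' : ℝ → ℝ × ℝ, IsPeriodicOrbit P Q γ' → Set.range γ' ⊆ U →
        Set.range γ' = Set.range γ

/-- `T` is the minimal (positive) period of `γ`. -/
def IsMinimalPeriod (γ : ℝ → ℝ × ℝ) (T : ℝ) : Prop :=
  0 < T ∧ Function.Periodic γ T ∧ ∀ T', 0 < T' → Function.Periodic γ T' → T ≤ T'

/-!
Along a solution `γ`, the function `f = D ∘ γ` satisfies the linear equation
`f' = M(γ) - (div X)(γ) · f`, so with the integrating factor `exp (∫ div X(γ))` the function
`f · exp (∫ div X(γ))` has derivative `M(γ) · exp (∫ div X(γ))`, which has constant sign.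
If `f` vanishes at `t₀`, it also vanishes at `t₀ ± T` by periodicity, so the monotone function
`f · exp (∫ div X(γ))` is identically zero on `[t₀ - T, t₀ + T]`. Hence `D` and `M` vanish on the
whole orbit, which the hypothesis on `{M = 0} ∩ {D = 0}` forbids.
-/

theorem fderiv_apply_prod_eq (D : ℝ × ℝ → ℝ) (p : ℝ × ℝ) (a b : ℝ) :
    fderiv ℝ D p (a, b) = a * pdx D p + b * pdy D p := by
  have hab : ((a, b) : ℝ × ℝ) = a • ((1 : ℝ), (0 : ℝ)) + b • ((0 : ℝ), (1 : ℝ)) := by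
    simp
  rw [hab, map_add, map_smul, map_smul, smul_eq_mul, smul_eq_mul, pdx, pdy]

theorem ContDiffOn.continuousOn_pdx {f : ℝ × ℝ → ℝ} {U : Set (ℝ × ℝ)}
    (hf : ContDiffOn ℝ 1 f U) (hU : IsOpen U) : ContinuousOn (pdx f) U :=
  (hf.continuousOn_fderiv_of_isOpen hU le_rfl).clm_apply continuousOn_const

theorem ContDiffOn.continuousOn_pdy {f : ℝ × ℝ → ℝ} {U : Set (ℝ × ℝ)}
    (hf : ContDiffOn ℝ 1 f U) (hU : IsOpen U) : ContinuousOn (pdy f) U :=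
  (hf.continuousOn_fderiv_of_isOpen hU le_rfl).clm_apply continuousOn_const

theorem IsSolution.continuous {P Q : ℝ × ℝ → ℝ} {γ : ℝ → ℝ × ℝ} (hγ : IsSolution P Q γ) :
    Continuous γ :=
  continuous_iff_continuousAt.2 fun t => (hγ t).continuousAt

theorem IsSolution.hasDerivAt_comp {P Q D : ℝ × ℝ → ℝ} {γ : ℝ → ℝ × ℝ}
    (hγ : IsSolution P Q γ) {t : ℝ} (hD : DifferentiableAt ℝ D (γ t)) :
    HasDerivAt (fun s => D (γ s)) (pdx D (γ t) * P (γ t) + pdy D (γ t) * Q (γ t)) t := by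
  refine (hD.hasFDerivAt.comp_hasDerivAt t (hγ t)).congr_deriv ?_
  rw [fderiv_apply_prod_eq]
  ring

section LinearODE

variable {f g m : ℝ → ℝ}

theorem hasDerivAt_mul_exp_integral (hg : Continuous g)
    (hf : ∀ t, HasDerivAt f (m t - f t * g t) t) (a t : ℝ) :
    HasDerivAt (fun s => f s * Real.exp (∫ u in a..s, g u))
      (m t * Real.exp (∫ u in a..t, g u)) t := by
  have hG : HasDerivAt (fun s => ∫ u in a..s, g u) (g t) t :=
    intervalIntegral.integral_hasDerivAt_right (hg.intervalIntegrable _ _)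
      hg.stronglyMeasurable.stronglyMeasurableAtFilter hg.continuousAt
  exact ((hf t).mul hG.exp).congr_deriv (by ring)

theorem eq_zero_of_hasDerivAt_sub_mul_of_nonneg (hg : Continuous g)
    (hf : ∀ t, HasDerivAt f (m t - f t * g t) t) (hm : ∀ t, 0 ≤ m t)
    {a b : ℝ} (ha : f a = 0) (hb : f b = 0) :
    ∀ t ∈ Ioo a b, f t = 0 ∧ m t = 0 := by
  set h := fun s => f s * Real.exp (∫ u in a..s, g u)
  have hderiv := hasDerivAt_mul_exp_integral hg hf a
  have hmono : Monotone h :=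
    monotone_of_deriv_nonneg (fun t => (hderiv t).differentiableAt) fun t => by
      rw [(hderiv t).deriv]
      exact mul_nonneg (hm t) (Real.exp_pos _).le
  have hzero : ∀ s ∈ Icc a b, h s = 0 := fun s hs => by
    have hlo : h a ≤ h s := hmono hs.1
    have hhi : h s ≤ h b := hmono hs.2
    simp only [h, ha, hb, zero_mul] at hlo hhi
    exact le_antisymm hhi hlo
  intro t ht
  have hconst : HasDerivAt h 0 t :=
    (hasDerivAt_const t (0 : ℝ)).congr_of_eventuallyEq <|
      Filter.eventually_of_mem (isOpen_Ioo.mem_nhds ht) fun s hs =>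
        hzero s (Ioo_subset_Icc_self hs)
  refine ⟨?_, ?_⟩
  · simpa [h, Real.exp_ne_zero] using hzero t (Ioo_subset_Icc_self ht)
  · simpa [Real.exp_ne_zero] using (hderiv t).unique hconst

theorem eq_zero_of_hasDerivAt_sub_mul (hg : Continuous g)
    (hf : ∀ t, HasDerivAt f (m t - f t * g t) t) (hm : (∀ t, 0 ≤ m t) ∨ (∀ t, m t ≤ 0))
    {a b : ℝ} (ha : f a = 0) (hb : f b = 0) :
    ∀ t ∈ Ioo a b, f t = 0 ∧ m t = 0 := by
  rcases hm with hm | hm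
  · exact eq_zero_of_hasDerivAt_sub_mul_of_nonneg hg hf hm ha hb
  · have hneg : ∀ t, HasDerivAt (fun s => -f s) (-m t - -f t * g t) t := fun t =>
      (hf t).neg.congr_deriv (by ring)
    intro t ht
    simpa using eq_zero_of_hasDerivAt_sub_mul_of_nonneg hg hneg (fun t => neg_nonneg.2 (hm t))
      (neg_eq_zero.2 ha) (neg_eq_zero.2 hb) t ht

theorem Function.Periodic.eq_zero_of_hasDerivAt_sub_mul {T : ℝ} (hT : 0 < T)
    (hfT : Function.Periodic f T) (hmT : Function.Periodic m T) (hg : Continuous g)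
    (hf : ∀ t, HasDerivAt f (m t - f t * g t) t) (hm : (∀ t, 0 ≤ m t) ∨ (∀ t, m t ≤ 0))
    {t₀ : ℝ} (h₀ : f t₀ = 0) (t : ℝ) : f t = 0 ∧ m t = 0 := by
  have hpair : Function.Periodic (fun s => (f s, m s)) T := fun s => by
    simp only [hfT s, hmT s]
  obtain ⟨y, hy, hty⟩ := hpair.exists_mem_Ico hT t t₀
  obtain ⟨hfy, hmy⟩ := _root_.eq_zero_of_hasDerivAt_sub_mul hg hf hm
    (by rwa [hfT.sub_eq]) (by rwa [hfT t₀]) y ⟨by linarith [hy.1], hy.2⟩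
  simp only [Prod.ext_iff] at hty
  exact ⟨hty.1.trans hfy, hty.2.trans hmy⟩

end LinearODE

theorem stmt0_general (U : Set (ℝ × ℝ)) (hU : IsOpen U)
    (P Q D : ℝ × ℝ → ℝ)
    (hP : ContDiffOn ℝ 1 P U) (hQ : ContDiffOn ℝ 1 Q U) (hD : ContDiffOn ℝ 1 D U)
    (M : ℝ × ℝ → ℝ)
    (hM : ∀ p, M p = pdx D p * P p + pdy D p * Q p + D p * (pdx P p + pdy Q p))
    (hsign : (∀ p ∈ U, 0 ≤ M p) ∨ (∀ p ∈ U, M p ≤ 0))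
    (hnoorb : ∀ γ : ℝ → ℝ × ℝ, IsPeriodicOrbit P Q γ →
        ¬ (Set.range γ ⊆ {p ∈ U | M p = 0 ∧ D p = 0}))
    (γ : ℝ → ℝ × ℝ) (hγ : IsPeriodicOrbit P Q γ) (hrange : Set.range γ ⊆ U) :
    ∀ t, D (γ t) ≠ 0 := by
  intro t₀ h₀
  have hsol := hγ.1
  obtain ⟨T, hT, hper⟩ := hγ.2.1
  have hmem : ∀ t, γ t ∈ U := fun t => hrange ⟨t, rfl⟩
  have hdiv : Continuous fun t => pdx P (γ t) + pdy Q (γ t) :=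
    ((hP.continuousOn_pdx hU).comp_continuous hsol.continuous hmem).add
      ((hQ.continuousOn_pdy hU).comp_continuous hsol.continuous hmem)
  have hderiv : ∀ t, HasDerivAt (fun s => D (γ s))
      (M (γ t) - D (γ t) * (pdx P (γ t) + pdy Q (γ t))) t := fun t => by
    refine (hsol.hasDerivAt_comp
      ((hD.contDiffAt (hU.mem_nhds (hmem t))).differentiableAt one_ne_zero)).congr_deriv ?_
    rw [hM]
    ring
  have hvanish := (hper.comp D).eq_zero_of_hasDerivAt_sub_mul hT (hper.comp M) hdiv hderiv
    (hsign.imp (fun h t => h _ (hmem t)) (fun h t => h _ (hmem t))) h₀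
  exact hnoorb γ hγ fun _ ⟨t, ht⟩ => ht ▸ ⟨hmem t, (hvanish t).2, (hvanish t).1⟩

/-- If `M = div(D·X)` has constant sign on the open set `U`,
vanishes only on a set of zero Lebesgue measure, and `{M = 0} ∩ {D = 0}` contains
the image of no periodic orbit, then no periodic orbit contained in `U` meets `{D = 0}`. -/
theorem stmt0 (U : Set (ℝ × ℝ)) (hU : IsOpen U)
    (P Q D : ℝ × ℝ → ℝ)
    (hP : ContDiffOn ℝ 1 P U) (hQ : ContDiffOn ℝ 1 Q U) (hD : ContDiffOn ℝ 1 D U)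
    (M : ℝ × ℝ → ℝ)
    (hM : ∀ p, M p = pdx D p * P p + pdy D p * Q p + D p * (pdx P p + pdy Q p))
    (hsign : (∀ p ∈ U, 0 ≤ M p) ∨ (∀ p ∈ U, M p ≤ 0))
    (hmeas : volume {p ∈ U | M p = 0} = 0)
    (hnoorb : ∀ γ : ℝ → ℝ × ℝ, IsPeriodicOrbit P Q γ →
        ¬ (Set.range γ ⊆ {p ∈ U | M p = 0 ∧ D p = 0}))
    (γ : ℝ → ℝ × ℝ) (hγ : IsPeriodicOrbit P Q γ) (hrange : Set.range γ ⊆ U) :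
    ∀ t, D (γ t) ≠ 0 :=
  stmt0_general U hU P Q D hP hQ hD M hM hsign hnoorb γ hγ hrange
end

section
/- Let X = (P,Q) be a C¹ planar vector field, let V : ℝ² → ℝ be a real-analytic function, let s ∈ ℝ, and set M_s = (∂V/∂x)P + (∂V/∂y)Q + s·V·div X. Let W ⊂ ℝ² be an open region on which M_s does not change sign and vanishes only on a set of zero Lebesgue measure. Then every periodic orbit of ẋ = P, ẏ = Q whose image is contained in W is either entirely contained in the set V₀ = {V = 0} or its image is disjoint from V₀. -/
open MeasureTheory Set

/-!
Along a solution `γ`, the function `v = V ∘ γ` satisfies the linear equation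
`v' = M_s(γ) - s · div X(γ) · v`. Multiplying by the integrating factor `exp (s ∫ div X(γ))`
turns it into `(v · e^{s ∫ div X(γ)})' = M_s(γ) · e^{s ∫ div X(γ)}`, which has constant sign
because `γ` stays in `W`; so `v · e^{s ∫ div X(γ)}` is monotone. If `v` vanishes at `t₀`, it also vanishes at `t₀ + T` by
periodicity, so the monotone function vanishes on `[t₀, t₀ + T]`, hence `v` vanishes on a whole
period and thus everywhere.
-/

lemma fderiv_apply_pair (f : ℝ × ℝ → ℝ) (p : ℝ × ℝ) (a b : ℝ) :
    fderiv ℝ f p (a, b) = pdx f p * a + pdy f p * b := by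
  have hab : ((a, b) : ℝ × ℝ) = a • ((1 : ℝ), (0 : ℝ)) + b • ((0 : ℝ), (1 : ℝ)) := by simp
  rw [hab, map_add, map_smul, map_smul, smul_eq_mul, smul_eq_mul, pdx, pdy, mul_comm a,
    mul_comm b]

lemma ContDiff.continuous_pdx {f : ℝ × ℝ → ℝ} (hf : ContDiff ℝ 1 f) : Continuous (pdx f) :=
  (hf.continuous_fderiv one_ne_zero).clm_apply continuous_const

lemma ContDiff.continuous_pdy {f : ℝ × ℝ → ℝ} (hf : ContDiff ℝ 1 f) : Continuous (pdy f) :=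
  (hf.continuous_fderiv one_ne_zero).clm_apply continuous_const

namespace IsSolution

variable {P Q : ℝ × ℝ → ℝ} {γ : ℝ → ℝ × ℝ}

lemma continuous_s3 (hγ : IsSolution P Q γ) : Continuous γ :=
  continuous_iff_continuousAt.2 fun t => (hγ t).continuousAt

lemma hasDerivAt_comp_s3 (hγ : IsSolution P Q γ) {V : ℝ × ℝ → ℝ} {t : ℝ}
    (hV : DifferentiableAt ℝ V (γ t)) :
    HasDerivAt (V ∘ γ) (pdx V (γ t) * P (γ t) + pdy V (γ t) * Q (γ t)) t := by
  simpa only [fderiv_apply_pair] using hV.hasFDerivAt.comp_hasDerivAt t (hγ t)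

end IsSolution

section LinearScalarEquation

variable {f m a : ℝ → ℝ}

lemma monotone_mul_exp_integral (ha : Continuous a)
    (hf : ∀ t, HasDerivAt f (m t - a t * f t) t) (hm : ∀ t, 0 ≤ m t) :
    Monotone fun t => f t * Real.exp (∫ u in (0 : ℝ)..t, a u) := by
  have hderiv : ∀ t, HasDerivAt (fun t => f t * Real.exp (∫ u in (0 : ℝ)..t, a u))
      (m t * Real.exp (∫ u in (0 : ℝ)..t, a u)) t := fun t =>
    ((hf t).mul (ha.integral_hasStrictDerivAt 0 t).hasDerivAt.exp).congr_deriv (by ring)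
  refine monotone_of_deriv_nonneg (fun t => (hderiv t).differentiableAt) fun t => ?_
  rw [(hderiv t).deriv]
  exact mul_nonneg (hm t) (Real.exp_pos _).le

lemma Function.Periodic.eq_zero_of_hasDerivAt_of_nonneg {T : ℝ} (hper : Function.Periodic f T)
    (hT : 0 < T) (ha : Continuous a) (hf : ∀ t, HasDerivAt f (m t - a t * f t) t)
    (hm : ∀ t, 0 ≤ m t) {t₀ : ℝ} (h₀ : f t₀ = 0) (t : ℝ) : f t = 0 := by
  obtain ⟨u, hu, hfu⟩ := hper.exists_mem_Ico hT t t₀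
  set g := fun t => f t * Real.exp (∫ u in (0 : ℝ)..t, a u)
  have hg : Monotone g := monotone_mul_exp_integral ha hf hm
  have hg₀ : g t₀ = 0 := by simp [g, h₀]
  have hgT : g (t₀ + T) = 0 := by simp [g, hper t₀, h₀]
  have hgu : g u = 0 := le_antisymm (hgT ▸ hg hu.2.le) (hg₀ ▸ hg hu.1)
  simpa [g, hfu, Real.exp_ne_zero] using hgu

lemma Function.Periodic.eq_zero_of_hasDerivAt {T : ℝ} (hper : Function.Periodic f T)
    (hT : 0 < T) (ha : Continuous a) (hf : ∀ t, HasDerivAt f (m t - a t * f t) t)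
    (hm : (∀ t, 0 ≤ m t) ∨ ∀ t, m t ≤ 0) {t₀ : ℝ} (h₀ : f t₀ = 0) (t : ℝ) : f t = 0 := by
  rcases hm with hm | hm
  · exact hper.eq_zero_of_hasDerivAt_of_nonneg hT ha hf hm h₀ t
  · have hneg := Function.Periodic.eq_zero_of_hasDerivAt_of_nonneg (f := -f) (m := -m)
      (t₀ := t₀) (fun x => by simp [hper x]) hT ha
      (fun t => (hf t).neg.congr_deriv (by simp only [Pi.neg_apply]; ring))
      (fun t => neg_nonneg.2 (hm t)) (by simp [h₀]) t
    simpa using hneg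

end LinearScalarEquation

theorem stmt3_general (P Q : ℝ × ℝ → ℝ) (hP : ContDiff ℝ 1 P) (hQ : ContDiff ℝ 1 Q)
    (V : ℝ × ℝ → ℝ) (hV : AnalyticOnNhd ℝ V Set.univ)
    (s : ℝ) (Ms : ℝ × ℝ → ℝ)
    (hMs : ∀ p, Ms p = pdx V p * P p + pdy V p * Q p + s * V p * (pdx P p + pdy Q p))
    (W : Set (ℝ × ℝ))
    (hsign : (∀ p ∈ W, 0 ≤ Ms p) ∨ (∀ p ∈ W, Ms p ≤ 0))
    (γ : ℝ → ℝ × ℝ) (hγ : IsPeriodicOrbit P Q γ) (hrange : Set.range γ ⊆ W) :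
    Set.range γ ⊆ {p | V p = 0} ∨ Disjoint (Set.range γ) {p | V p = 0} := by
  obtain ⟨hsol, ⟨T, hT, hper⟩, -⟩ := hγ
  have hdiv : Continuous fun t => s * (pdx P (γ t) + pdy Q (γ t)) :=
    continuous_const.mul ((hP.continuous_pdx.add hQ.continuous_pdy).comp hsol.continuous_s3)
  have hVγ : ∀ t, HasDerivAt (V ∘ γ)
      (Ms (γ t) - s * (pdx P (γ t) + pdy Q (γ t)) * (V ∘ γ) t) t := fun t =>
    (hsol.hasDerivAt_comp_s3 (hV (γ t) trivial).differentiableAt).congr_deriv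
      (by rw [hMs, Function.comp_apply]; ring)
  have hsignγ : (∀ t, 0 ≤ Ms (γ t)) ∨ ∀ t, Ms (γ t) ≤ 0 :=
    hsign.imp (fun h t => h _ (hrange ⟨t, rfl⟩)) (fun h t => h _ (hrange ⟨t, rfl⟩))
  by_cases hzero : ∃ t₀, V (γ t₀) = 0
  · obtain ⟨t₀, h₀⟩ := hzero
    left
    rintro _ ⟨t, rfl⟩
    exact (hper.comp V).eq_zero_of_hasDerivAt hT hdiv hVγ hsignγ h₀ t
  · right
    rw [disjoint_left]
    rintro _ ⟨t, rfl⟩ ht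
    exact hzero ⟨t, ht⟩

/-- If `M_s` has constant sign on the open region `W` and vanishes
only on a null set, every periodic orbit contained in `W` is either entirely
contained in `{V = 0}` or disjoint from it. -/
theorem stmt3 (P Q : ℝ × ℝ → ℝ) (hP : ContDiff ℝ 1 P) (hQ : ContDiff ℝ 1 Q)
    (V : ℝ × ℝ → ℝ) (hV : AnalyticOnNhd ℝ V Set.univ)
    (s : ℝ) (Ms : ℝ × ℝ → ℝ)
    (hMs : ∀ p, Ms p = pdx V p * P p + pdy V p * Q p + s * V p * (pdx P p + pdy Q p))
    (W : Set (ℝ × ℝ)) (hW : IsOpen W)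
    (hsign : (∀ p ∈ W, 0 ≤ Ms p) ∨ (∀ p ∈ W, Ms p ≤ 0))
    (hmeas : volume {p ∈ W | Ms p = 0} = 0)
    (γ : ℝ → ℝ × ℝ) (hγ : IsPeriodicOrbit P Q γ) (hrange : Set.range γ ⊆ W) :
    Set.range γ ⊆ {p | V p = 0} ∨ Disjoint (Set.range γ) {p | V p = 0} :=
  stmt3_general P Q hP hQ V hV s Ms hMs W hsign γ hγ hrange
end

section
/- Consider the generalized Liénard system ẋ = y − F(x) = P(x,y), ẏ = −g(x) = Q(x,y), where F is C¹ and g is continuous, and set G(x) = ∫₀ˣ g(z) dz. Let s, c₀, c₁ ∈ ℝ and define V₂(x,y) = ( (s(s+1)/2)F(x)² + c₁ s F(x) + 2G(x) + c₀ ) + (sF(x) + c₁)y + y². Then for all (x,y): (∂V₂/∂x)P + (∂V₂/∂y)Q + s·V₂·(∂P/∂x + ∂Q/∂y) = −(s(s+1)(s+2)/2)F(x)²F′(x) − s(s+1)c₁F(x)F′(x) − (s+2)g(x)F(x) − 2sF′(x)G(x) − s c₀ F′(x) − c₁ g(x). In particular, for s = −1 and V₂(x,y) = (−c₁F(x) +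 2G(x) + c₀) + (−F(x) + c₁)y + y², this expression equals 2F′(x)G(x) + c₀F′(x) − g(x)F(x) − c₁g(x). -/
/-!
For `V = φ(x) + ψ(x) y + y²` and the Liénard field, `M_s` is a polynomial of degree at most two
in `y`, with `y²`-coefficient `ψ' - s F'`. The choice `ψ = s F + c₁` kills it, and then
`φ = s(s+1)/2 F² + c₁ s F + 2G + c₀` kills the `y`-coefficient `φ' - ψ' F - 2g - s F' ψ`,
leaving a function of `x` alone. The case `s = -1` is the general formula specialised.
-/

open MeasureTheory Set

noncomputable def Ms (s : ℝ) (P Q V : ℝ × ℝ → ℝ) (v : ℝ × ℝ) : ℝ :=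
  pdx V v * P v + pdy V v * Q v + s * V v * (pdx P v + pdy Q v)

theorem pdy_comp_fst (f : ℝ → ℝ) (v : ℝ × ℝ) : pdy (fun w : ℝ × ℝ => f w.1) v = 0 := by
  by_cases h : DifferentiableAt ℝ (fun w : ℝ × ℝ => f w.1) v
  · simp [pdy, ← h.lineDeriv_eq_fderiv, lineDeriv]
  · rw [pdy, fderiv_zero_of_not_differentiableAt h]
    rfl

section QuadraticInY

variable {φ ψ : ℝ → ℝ} {φ' ψ' x y : ℝ}

theorem hasFDerivAt_quadratic_snd (hφ : HasDerivAt φ φ' x) (hψ : HasDerivAt ψ ψ' x) (c : ℝ) :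
    HasFDerivAt (fun v : ℝ × ℝ => φ v.1 + ψ v.1 * v.2 + c * v.2 ^ 2)
      ((φ' + ψ' * y) • ContinuousLinearMap.fst ℝ ℝ ℝ
        + (ψ x + 2 * c * y) • ContinuousLinearMap.snd ℝ ℝ ℝ) (x, y) := by
  have hφ₁ := hφ.comp_hasFDerivAt (x, y) (hasFDerivAt_fst (𝕜 := ℝ) (p := (x, y)))
  have hψ₁ := hψ.comp_hasFDerivAt (x, y) (hasFDerivAt_fst (𝕜 := ℝ) (p := (x, y)))
  have hy : HasFDerivAt (fun v : ℝ × ℝ => v.2) (ContinuousLinearMap.snd ℝ ℝ ℝ) (x, y) :=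
    hasFDerivAt_snd
  refine ((hφ₁.add (hψ₁.mul hy)).add ((hy.pow 2).const_mul c)).congr_fderiv ?_
  refine ContinuousLinearMap.ext fun v => ?_
  simp only [Function.comp_apply, Nat.add_one_sub_one, pow_one, nsmul_eq_mul, Nat.cast_ofNat,
    add_apply, smul_apply, ContinuousLinearMap.coe_fst',
    ContinuousLinearMap.coe_snd', smul_eq_mul]
  ring

theorem pdx_quadratic_snd (hφ : HasDerivAt φ φ' x) (hψ : HasDerivAt ψ ψ' x) (c : ℝ) :
    pdx (fun v : ℝ × ℝ => φ v.1 + ψ v.1 * v.2 + c * v.2 ^ 2) (x, y) = φ' + ψ' * y := by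
  simp [pdx, (hasFDerivAt_quadratic_snd hφ hψ c).fderiv]

theorem pdy_quadratic_snd (hφ : HasDerivAt φ φ' x) (hψ : HasDerivAt ψ ψ' x) (c : ℝ) :
    pdy (fun v : ℝ × ℝ => φ v.1 + ψ v.1 * v.2 + c * v.2 ^ 2) (x, y) = ψ x + 2 * c * y := by
  simp [pdy, (hasFDerivAt_quadratic_snd hφ hψ c).fderiv]

end QuadraticInY

theorem Ms_lienard_of_quadratic {F g φ ψ : ℝ → ℝ} {F' φ' ψ' x y : ℝ} (s : ℝ)
    (hF : HasDerivAt F F' x) (hφ : HasDerivAt φ φ' x) (hψ : HasDerivAt ψ ψ' x)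
    {P Q V : ℝ × ℝ → ℝ} (hP : ∀ v : ℝ × ℝ, P v = v.2 - F v.1)
    (hQ : ∀ v : ℝ × ℝ, Q v = -g v.1) (hV : ∀ v : ℝ × ℝ, V v = φ v.1 + ψ v.1 * v.2 + v.2 ^ 2) :
    Ms s P Q V (x, y) = (φ' + ψ' * y) * (y - F x) - (ψ x + 2 * y) * g x
      - s * F' * (φ x + ψ x * y + y ^ 2) := by
  have hPf : P = fun v : ℝ × ℝ => (fun u => -F u) v.1 + (fun _ => 1) v.1 * v.2 + 0 * v.2 ^ 2 := by
    ext v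
    simp only [hP, one_mul, zero_mul, add_zero]
    ring
  have hVf : V = fun v : ℝ × ℝ => φ v.1 + ψ v.1 * v.2 + 1 * v.2 ^ 2 := by
    ext v; simp [hV]
  have hPx : pdx P (x, y) = -F' := by
    simpa [hPf] using pdx_quadratic_snd (y := y) hF.neg (hasDerivAt_const x (1 : ℝ)) 0
  have hQy : pdy Q (x, y) = 0 := by
    rw [show Q = fun v : ℝ × ℝ => -g v.1 from funext hQ]
    exact pdy_comp_fst (fun u => -g u) (x, y)
  rw [Ms, hPx, hQy, hVf, pdx_quadratic_snd hφ hψ, pdy_quadratic_snd hφ hψ, hP, hQ]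
  ring

theorem Ms_lienard_V₂ {F g G : ℝ → ℝ} (hF : Differentiable ℝ F) (hG : ∀ x, HasDerivAt G (g x) x)
    (s c₀ c₁ : ℝ) {P Q V₂ : ℝ × ℝ → ℝ}
    (hP : ∀ v : ℝ × ℝ, P v = v.2 - F v.1) (hQ : ∀ v : ℝ × ℝ, Q v = -g v.1)
    (hV₂ : ∀ v : ℝ × ℝ, V₂ v = (s * (s + 1) / 2 * (F v.1) ^ 2 + c₁ * s * F v.1
        + 2 * G v.1 + c₀) + (s * F v.1 + c₁) * v.2 + v.2 ^ 2) (v : ℝ × ℝ) :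
    Ms s P Q V₂ v
      = -(s * (s + 1) * (s + 2) / 2) * (F v.1) ^ 2 * deriv F v.1
          - s * (s + 1) * c₁ * F v.1 * deriv F v.1
          - (s + 2) * g v.1 * F v.1
          - 2 * s * deriv F v.1 * G v.1
          - s * c₀ * deriv F v.1
          - c₁ * g v.1 := by
  obtain ⟨x, y⟩ := v
  have hF' : HasDerivAt F (deriv F x) x := (hF x).hasDerivAt
  have hφ : HasDerivAt (fun u => s * (s + 1) / 2 * F u ^ 2 + c₁ * s * F u + 2 * G u + c₀)
      (s * (s + 1) / 2 * (2 * F x * deriv F x) + c₁ * s * deriv F x + 2 * g x) x := by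
    refine (((((hF'.pow 2).const_mul (s * (s + 1) / 2)).add (hF'.const_mul (c₁ * s))).add
      ((hG x).const_mul 2)).add_const c₀).congr_deriv ?_
    push_cast
    ring
  rw [Ms_lienard_of_quadratic s hF' hφ ((hF'.const_mul s).add_const c₁) hP hQ hV₂]
  ring

/-- Explicit formula for `M_s` for the generalized Liénard system
`ẋ = y − F(x), ẏ = −g(x)` with `V₂` as in Corollary 2, and the particular case `s = −1`. -/
theorem stmt7 (F g : ℝ → ℝ) (hF : ContDiff ℝ 1 F) (hg : Continuous g)
    (G : ℝ → ℝ) (hG : ∀ x, G x = ∫ z in (0:ℝ)..x, g z)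
    (s c₀ c₁ : ℝ)
    (P Q : ℝ × ℝ → ℝ)
    (hP : ∀ v : ℝ × ℝ, P v = v.2 - F v.1) (hQ : ∀ v : ℝ × ℝ, Q v = -g v.1)
    (V₂ : ℝ × ℝ → ℝ)
    (hV₂ : ∀ v : ℝ × ℝ, V₂ v = (s * (s + 1) / 2 * (F v.1) ^ 2 + c₁ * s * F v.1
        + 2 * G v.1 + c₀) + (s * F v.1 + c₁) * v.2 + v.2 ^ 2)
    (W₂ : ℝ × ℝ → ℝ)
    (hW₂ : ∀ v : ℝ × ℝ, W₂ v = (-c₁ * F v.1 + 2 * G v.1 + c₀)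
        + (-F v.1 + c₁) * v.2 + v.2 ^ 2) :
    (∀ v : ℝ × ℝ,
      pdx V₂ v * P v + pdy V₂ v * Q v + s * V₂ v * (pdx P v + pdy Q v)
        = -(s * (s + 1) * (s + 2) / 2) * (F v.1) ^ 2 * deriv F v.1
          - s * (s + 1) * c₁ * F v.1 * deriv F v.1
          - (s + 2) * g v.1 * F v.1
          - 2 * s * deriv F v.1 * G v.1
          - s * c₀ * deriv F v.1
          - c₁ * g v.1) ∧
    (∀ v : ℝ × ℝ,
      pdx W₂ v * P v + pdy W₂ v * Q v + (-1 : ℝ) * W₂ v * (pdx P v + pdy Q v)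
        = 2 * deriv F v.1 * G v.1 + c₀ * deriv F v.1 - g v.1 * F v.1
          - c₁ * g v.1) := by
  have hF' : Differentiable ℝ F := hF.differentiable one_ne_zero
  have hG' : ∀ x, HasDerivAt G (g x) x := fun x => by
    rw [funext hG]
    exact (hg.integral_hasStrictDerivAt 0 x).hasDerivAt
  refine ⟨Ms_lienard_V₂ hF' hG' s c₀ c₁ hP hQ hV₂, fun v => ?_⟩
  have hW₂' : ∀ v : ℝ × ℝ, W₂ v = ((-1) * ((-1) + 1) / 2 * (F v.1) ^ 2 + c₁ * (-1) * F v.1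
      + 2 * G v.1 + c₀) + ((-1) * F v.1 + c₁) * v.2 + v.2 ^ 2 := fun v => by
    rw [hW₂]
    ring
  exact (Ms_lienard_V₂ hF' hG' (-1) c₀ c₁ hP hQ hW₂' v).trans (by ring)
end

section
/- Consider the system ẋ = y = P(x,y), ẏ = h₀(x) + h₁(x)y + h₂(x)y² + y³ = Q(x,y), where h₀, h₁, h₂ are C^∞ functions. Let v₂ be any C^∞ function and define v₁(x) = v₂′(x) + (2/3)h₂(x)v₂(x) and v₀(x) = (1/2)( v₁′(x) + (4/3)h₁(x)v₂(x) − (1/3)h₂(x)v₁(x) ). Then, with V₂(x,y) = v₀(x) + v₁(x)y + v₂(x)y², the following identity holds for all (x,y): (∂V₂/∂x)P + (∂V₂/∂y)Q − (2/3)·V₂·(∂P/∂x + ∂Q/∂y) = ( v₀′(x) + (1/3)h₁(x)v₁(x) − (4/3)h₂(x)v₀(x) + 2h₀(x)v₂(x) )·y + ( h₀(x)v₁(x) − (2/3)h₁(x)v₀(x) ). In particular, if v₂ solves the third-order linear ODE obtained by setting the coefficient of y identically to zero, then the left-hand side is a function of x only, equal to M^{[2]}(x) = h₀(x)v₁(x)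 − (2/3)h₁(x)v₀(x). -/
open MeasureTheory Set

/-- For the system `ẋ = y`, `ẏ = h₀(x)+h₁(x)y+h₂(x)y²+y³`, with
`v₁, v₀` built from an arbitrary smooth `v₂`, the expression `M_{−2/3}` computed
from `V₂ = v₀ + v₁ y + v₂ y²` reduces to a first degree polynomial in `y`; if moreover the
coefficient of `y` vanishes identically it is the function of `x` only
`M^{[2]}(x) = h₀ v₁ − (2/3) h₁ v₀`. -/
theorem stmt9 (h₀ h₁ h₂ : ℝ → ℝ)
    (hh₀ : ContDiff ℝ (⊤ : ℕ∞) h₀) (hh₁ : ContDiff ℝ (⊤ : ℕ∞) h₁) (hh₂ : ContDiff ℝ (⊤ : ℕ∞) h₂)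
    (v₂ : ℝ → ℝ) (hv₂ : ContDiff ℝ (⊤ : ℕ∞) v₂)
    (v₁ v₀ : ℝ → ℝ)
    (hv₁ : ∀ x, v₁ x = deriv v₂ x + (2 / 3) * h₂ x * v₂ x)
    (hv₀ : ∀ x, v₀ x = (1 / 2) * (deriv v₁ x + (4 / 3) * h₁ x * v₂ x
        - (1 / 3) * h₂ x * v₁ x)) :
    (∀ x y : ℝ,
      (deriv v₀ x + deriv v₁ x * y + deriv v₂ x * y ^ 2) * y
        + (v₁ x + 2 * v₂ x * y) * (h₀ x + h₁ x * y + h₂ x * y ^ 2 + y ^ 3)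
        - (2 / 3) * (v₀ x + v₁ x * y + v₂ x * y ^ 2)
            * (h₁ x + 2 * h₂ x * y + 3 * y ^ 2)
      = (deriv v₀ x + (1 / 3) * h₁ x * v₁ x - (4 / 3) * h₂ x * v₀ x
            + 2 * h₀ x * v₂ x) * y
          + (h₀ x * v₁ x - (2 / 3) * h₁ x * v₀ x)) ∧
    ((∀ x, deriv v₀ x + (1 / 3) * h₁ x * v₁ x - (4 / 3) * h₂ x * v₀ x
          + 2 * h₀ x * v₂ x = 0) →
      ∀ x y : ℝ,
        (deriv v₀ x + deriv v₁ x * y + deriv v₂ x * y ^ 2) * y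
          + (v₁ x + 2 * v₂ x * y) * (h₀ x + h₁ x * y + h₂ x * y ^ 2 + y ^ 3)
          - (2 / 3) * (v₀ x + v₁ x * y + v₂ x * y ^ 2)
              * (h₁ x + 2 * h₂ x * y + 3 * y ^ 2)
        = h₀ x * v₁ x - (2 / 3) * h₁ x * v₀ x) := by
  have key : ∀ x y : ℝ,
      (deriv v₀ x + deriv v₁ x * y + deriv v₂ x * y ^ 2) * y
        + (v₁ x + 2 * v₂ x * y) * (h₀ x + h₁ x * y + h₂ x * y ^ 2 + y ^ 3)
        - (2 / 3) * (v₀ x + v₁ x * y + v₂ x * y ^ 2)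
            * (h₁ x + 2 * h₂ x * y + 3 * y ^ 2)
      = (deriv v₀ x + (1 / 3) * h₁ x * v₁ x - (4 / 3) * h₂ x * v₀ x
            + 2 * h₀ x * v₂ x) * y
          + (h₀ x * v₁ x - (2 / 3) * h₁ x * v₀ x) := by
    intro x y
    have hd2 : deriv v₂ x = v₁ x - (2 / 3) * h₂ x * v₂ x := by
      have := hv₁ x; linarith
    have hd1 : deriv v₁ x = 2 * v₀ x - (4 / 3) * h₁ x * v₂ x
        + (1 / 3) * h₂ x * v₁ x := by
      have := hv₀ x; linarith
    rw [hd1, hd2]; ring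
  refine ⟨key, fun hz x y => ?_⟩
  rw [key x y, hz x]; ring
end
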